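/- Let t ∈ [0,1) be a dyadic rational and f ∈ L^1(G). Then there is a constant C (depending only on t and the absolute constant in the L^1-boundedness of the Walsh–Fejér means) such that for all n ≥ 1, E|σ̃_n^{(t)} f| ≤ C · E|f|, where σ̃_n^{(t)} f = (1/n) ∑_{k=0}^{n−1} S̃_k^{(t)} f is the conjugate Fejér mean. -/

import Mathlib

open MeasureTheory Finset

noncomputable section

/-- The dyadic group: countable product of ℤ/2. -/
abbrev G := ℕ → ZMod 2

/-- Binary digits of a real number, as an element of the dyadic group. -/
def toG (x : ℝ) : G := fun n => ((⌊x * 2 ^ (n + 1)⌋ : ℤ) : ZMod 2)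

/-- Haar (product) measure on the dyadic group, realized as the pushforward
of Lebesgue measure on `[0,1)` under the binary digit map. -/
def muG : Measure G := (volume.restrict (Set.Ico (0:ℝ) 1)).map toG

/-- Walsh–Paley functions. -/
def walsh (m : ℕ) (x : G) : ℝ :=
  ∏ k ∈ Finset.range m, if m.testBit k then (-1 : ℝ) ^ ((x k).val) else 1

/-- Walsh–Dirichlet kernel. -/
def Dir (n : ℕ) (x : G) : ℝ := ∑ k ∈ Finset.range n, walsh k x

/-- Dyadic interval `I_n` of rank `n` about `0`. -/
def Iset (n : ℕ) : Set G := {x | ∀ i < n, x i = 0}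

/-- `k`-th binary digit of `n`, as a natural number. -/
def bit (n k : ℕ) : ℕ := (n.testBit k).toNat

/-- `α_i(n) = |∑_{k<i} n_k 2^k − n_i 2^i|`. -/
def alpha (n i : ℕ) : ℤ :=
  |(∑ k ∈ Finset.range i, (bit n k : ℤ) * 2 ^ k) - (bit n i : ℤ) * 2 ^ i|

/-- Binary variation `V(n) = n_0 + ∑_{k≥1} |n_k − n_{k−1}|`. -/
def V (n : ℕ) : ℕ :=
  bit n 0 + ∑ k ∈ Finset.range n, if n.testBit (k+1) ≠ n.testBit k then 1 else 0

/-- `A(n)`: indices where consecutive binary digits differ (with `n_{−1} = 0`). -/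
def Aset (n : ℕ) : Finset ℕ :=
  (Finset.range (n+1)).filter
    (fun i => if i = 0 then n.testBit 0 else n.testBit i ≠ n.testBit (i-1))

/-- `S(n) = ∑_{i ∈ A(n)} α_i(n)/2^{i+1}`. -/
def S (n : ℕ) : ℝ := ∑ i ∈ Aset n, (alpha n i : ℝ) / 2 ^ (i+1)

/-- `j`-th binary digit of a real number `t ∈ [0,1)`. -/
def tdig (t : ℝ) (j : ℕ) : ℕ := (⌊t * 2 ^ (j+1)⌋ % 2).toNat

/-- `m = ∑_{i=0}^{N-1} t_{i+1} 2^i`. -/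
def mOf (t : ℝ) (N : ℕ) : ℕ := ∑ i ∈ Finset.range N, tdig t (i+1) * 2 ^ i

/-- Conjugate Walsh–Dirichlet kernel
`D̃_n^{(t)} = D_n − 2 w_m D_m − 2 t_{N+1}(D_n − D_{2^N})` where `m = mOf t N`. -/
def Dconj (t : ℝ) (N n : ℕ) (x : G) : ℝ :=
  Dir n x - 2 * walsh (mOf t N) x * Dir (mOf t N) x
    - 2 * (tdig t (N+1) : ℝ) * (Dir n x - Dir (2^N) x)

/-- Lebesgue constant of the conjugate transform. -/
def Leb (t : ℝ) (N n : ℕ) : ℝ := ∫ x, |Dconj t N n x| ∂muG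

/-- `T(a,b) = {i : 1 ≤ i ≤ N−1, a_i ≠ a_{i−1}, b_i = b_{i−1}}`. -/
def Tset (N a b : ℕ) : Finset ℕ :=
  (Finset.Icc 1 (N-1)).filter
    (fun i => a.testBit i ≠ a.testBit (i-1) ∧ b.testBit i = b.testBit (i-1))

/-- Walsh–Fourier coefficient. -/
def fcoef (f : G → ℝ) (i : ℕ) : ℝ := ∫ x, f x * walsh i x ∂muG

/-- `β_0(t) = (−1)^{t_0}`, `β_k(t) = (−1)^{t_n}` for `2^{n−1} ≤ k < 2^n`. -/
def betaC (t : ℝ) (k : ℕ) : ℝ :=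
  if k = 0 then (-1 : ℝ) ^ (tdig t 0) else (-1 : ℝ) ^ (tdig t (Nat.log 2 k + 1))

/-- Conjugate partial sums `S̃_n^{(t)} f`. -/
def Stilde (t : ℝ) (f : G → ℝ) (n : ℕ) (x : G) : ℝ :=
  ∑ k ∈ Finset.range n, betaC t k * fcoef f k * walsh k x

/-- Conjugate Fejér means `σ̃_n^{(t)} f`. -/
def sigmaT (t : ℝ) (f : G → ℝ) (n : ℕ) (x : G) : ℝ :=
  (1 / (n : ℝ)) * ∑ k ∈ Finset.range n, Stilde t f k x

/-- `t` is a dyadic rational. -/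
def IsDyadicRat (t : ℝ) : Prop := ∃ p k : ℕ, t = (p : ℝ) / 2 ^ k

/-!
For `t = p / 2 ^ K` the signs `β_j(t)` are `1` once `j ≥ 2 ^ K`, so the conjugate kernel
`F̃_n = ∑_{k<n} ∑_{j<k} β_j w_j` differs pointwise from `F_n = ∑_{k<n} D_k = n K_n` by at most
`2 ^ (K+1) n`. For `n = 2 ^ m + k` with `k < 2 ^ m` one has
`F_n = F_{2^m} + k D_{2^m} + w_{2^m} F_k` with `F_{2^m}, D_{2^m} ≥ 0`, so `‖F_n‖₁ ≤ 4 n` by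
induction. Finally `σ̃_n f = (1/n) f ∗ F̃_n`, and Young's inequality on the dyadic group (Fubini
and translation invariance of the Haar measure for functions of finitely many coordinates) gives
`‖σ̃_n f‖₁ ≤ (4 + 2 ^ (K+1)) ‖f‖₁`.
-/

lemma walsh_eq_prod_range {m N : ℕ} (h : m ≤ N) (x : G) :
    walsh m x = ∏ k ∈ range N, if m.testBit k then (-1 : ℝ) ^ (x k).val else 1 := by
  rw [walsh, ← prod_range_mul_prod_Ico _ h, prod_eq_one (s := Ico m N), mul_one]
  intro k hk
  rw [Nat.testBit_lt_two_pow ((mem_Ico.1 hk).1.trans_lt k.lt_two_pow_self)]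
  rfl

lemma abs_walsh (m : ℕ) (x : G) : |walsh m x| = 1 := by
  rw [walsh, abs_prod]
  exact prod_eq_one fun k _ => by split_ifs <;> simp

lemma walsh_add (m : ℕ) (x y : G) : walsh m (x + y) = walsh m x * walsh m y := by
  rw [walsh, walsh, walsh, ← prod_mul_distrib]
  refine prod_congr rfl fun k _ => ?_
  split_ifs
  · rw [Pi.add_apply, ZMod.val_add, ← neg_one_pow_eq_pow_mod_two, pow_add]
  · rw [mul_one]

lemma walsh_zero (x : G) : walsh 0 x = 1 := by simp [walsh]

lemma walsh_single {m i : ℕ} (hi : m.testBit i) : walsh m (Pi.single i 1) = -1 := by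
  have him : i < m := i.lt_two_pow_self.trans_le (Nat.ge_two_pow_of_testBit hi)
  rw [walsh, prod_eq_single_of_mem i (mem_range.2 him)]
  · simp [hi, ZMod.val_one]
  · intro k _ hk
    simp [Pi.single_eq_of_ne hk]

lemma dependsOn_walsh {m N : ℕ} (h : m ≤ N) : DependsOn (walsh m) (Set.Iio N) :=
  fun x y hxy => prod_congr rfl fun k hk => by rw [hxy k ((mem_range.1 hk).trans_le h)]

lemma measurable_walsh (m : ℕ) : Measurable (walsh m) := by
  refine Finset.measurable_prod _ fun k _ => ?_
  split_ifs
  · exact (Measurable.of_discrete (f := fun a : ZMod 2 => (-1 : ℝ) ^ a.val)).comp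
      (measurable_pi_apply k)
  · exact measurable_const

lemma walsh_two_pow_add {m k : ℕ} (hk : k < 2 ^ m) (x : G) :
    walsh (2 ^ m + k) x = walsh (2 ^ m) x * walsh k x := by
  have hlt : 2 ^ m + k < 2 ^ (m + 1) := by rw [pow_succ]; omega
  rw [walsh_eq_prod_range hlt.le, walsh_eq_prod_range (N := 2 ^ (m + 1)) (by omega),
    walsh_eq_prod_range (N := 2 ^ (m + 1)) (by omega), ← prod_mul_distrib]
  refine prod_congr rfl fun j _ => ?_
  rcases lt_trichotomy j m with hj | rfl | hj
  · simp [Nat.testBit_two_pow_add_gt hj, Nat.testBit_two_pow_of_ne hj.ne']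
  · simp [Nat.testBit_two_pow_add_eq, Nat.testBit_lt_two_pow hk]
  · have hpow : 2 ^ (m + 1) ≤ 2 ^ j := Nat.pow_le_pow_right two_pos hj
    simp [Nat.testBit_lt_two_pow (hlt.trans_le hpow), Nat.testBit_two_pow_of_ne hj.ne,
      Nat.testBit_lt_two_pow (hk.trans (Nat.pow_lt_pow_right one_lt_two hj))]

lemma measurable_toG : Measurable toG :=
  measurable_pi_lambda _ fun _ =>
    Measurable.of_discrete.comp (Int.measurable_floor.comp (measurable_id.mul_const _))

instance : IsProbabilityMeasure muG := by
  constructor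
  rw [muG, Measure.map_apply measurable_toG MeasurableSet.univ]
  simp [Real.volume_Ico]

def extendZero (N : ℕ) (v : Fin N → ZMod 2) : G := fun i => if h : i < N then v ⟨i, h⟩ else 0

/-- Most significant digit first, matching `toG (j / 2 ^ N)`. -/
def binaryDigits (N : ℕ) : Fin (2 ^ N) ≃ (Fin N → ZMod 2) :=
  finFunctionFinEquiv.symm.trans (Equiv.arrowCongr Fin.revPerm (Equiv.refl _))

lemma toG_apply_of_mem_Ico {N : ℕ} (j : Fin (2 ^ N)) {x : ℝ}
    (hx : x ∈ Set.Ico ((j : ℝ) / 2 ^ N) ((j + 1) / 2 ^ N)) (i : Fin N) :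
    toG x i = binaryDigits N j i := by
  have hfloor : ⌊x * 2 ^ N⌋ = j := by
    rw [Int.floor_eq_iff]
    constructor
    · simpa [div_le_iff₀] using hx.1
    · simpa [lt_div_iff₀] using hx.2
  have hpow : (2 : ℝ) ^ N = 2 ^ ((i : ℕ) + 1) * ((2 ^ (N - 1 - i) : ℕ) : ℝ) := by
    rw [Nat.cast_pow, Nat.cast_ofNat, ← pow_add]
    congr 1
    omega
  have hdigit : ⌊x * 2 ^ ((i : ℕ) + 1)⌋ = ((j / 2 ^ (N - 1 - i) : ℕ) : ℤ) := by
    rw [Int.natCast_div, ← hfloor, ← Int.floor_div_natCast, hpow, mul_div_assoc,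
      mul_div_cancel_right₀ _ (by positivity)]
  apply ZMod.val_injective
  change ((⌊x * 2 ^ ((i : ℕ) + 1)⌋ : ℤ) : ZMod 2).val = (finFunctionFinEquiv.symm j i.rev).val
  rw [hdigit, Int.cast_natCast, ZMod.val_natCast, finFunctionFinEquiv_symm_apply_val, Fin.val_rev]
  congr 3
  omega

lemma Ico_zero_one_eq_biUnion (N : ℕ) :
    Set.Ico (0 : ℝ) 1 = ⋃ j ∈ range (2 ^ N), Set.Ico ((j : ℝ) / 2 ^ N) ((j + 1) / 2 ^ N) := by
  apply subset_antisymm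
  · simpa using Ico_subset_biUnion_Ico (2 ^ N) fun j : ℕ => (j : ℝ) / 2 ^ N
  · refine Set.iUnion₂_subset fun j hj => Set.Ico_subset_Ico (by positivity) ?_
    rw [div_le_one (by positivity)]
    exact_mod_cast mem_range.1 hj

theorem integral_eq_average_of_dependsOn {N : ℕ} {g : G → ℝ} (hg : Measurable g)
    (hdep : DependsOn g (Set.Iio N)) :
    ∫ x, g x ∂muG = (2 ^ N : ℝ)⁻¹ * ∑ v : Fin N → ZMod 2, g (extendZero N v) := by
  set I : ℕ → Set ℝ := fun j => Set.Ico ((j : ℝ) / 2 ^ N) ((j + 1) / 2 ^ N)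
  have hconst (j : Fin (2 ^ N)) :
      Set.EqOn (fun x => g (toG x)) (fun _ => g (extendZero N (binaryDigits N j))) (I j) :=
    fun x hx => hdep fun i hi => by
      rw [extendZero, dif_pos (Set.mem_Iio.1 hi), toG_apply_of_mem_Ico j hx ⟨i, hi⟩]
  have hvol (j : ℕ) : volume.real (I j) = (2 ^ N : ℝ)⁻¹ := by
    have hlen : ((j : ℝ) + 1) / 2 ^ N - j / 2 ^ N = (2 ^ N : ℝ)⁻¹ := by ring
    rw [measureReal_def, Real.volume_Ico, hlen, ENNReal.toReal_ofReal (by positivity)]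
  have hdisj : Set.Pairwise (range (2 ^ N) : Set ℕ) (Function.onFun Disjoint I) :=
    fun i _ j _ hij => by
    simpa [I] using Monotone.pairwise_disjoint_on_Ico_succ (f := fun j : ℕ => (j : ℝ) / 2 ^ N)
      (fun a b hab => div_le_div_of_nonneg_right (by exact_mod_cast hab) (by positivity)) hij
  have hint (j : ℕ) (hj : j ∈ range (2 ^ N)) : IntegrableOn (fun x => g (toG x)) (I j) := by
    refine (integrableOn_congr_fun (hconst ⟨j, mem_range.1 hj⟩) measurableSet_Ico).2 ?_
    exact integrableOn_const (by simp [I, Real.volume_Ico])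
  rw [muG, integral_map measurable_toG.aemeasurable hg.aestronglyMeasurable,
    Ico_zero_one_eq_biUnion N, integral_biUnion_finset _ (fun _ _ => measurableSet_Ico) hdisj hint,
    ← Fin.sum_univ_eq_sum_range (fun j => ∫ x in I j, g (toG x)), mul_sum,
    ← (binaryDigits N).sum_comp]
  refine sum_congr rfl fun j _ => ?_
  rw [setIntegral_congr_fun measurableSet_Ico (hconst j), setIntegral_const, hvol, smul_eq_mul]

theorem integral_comp_add_right_of_dependsOn {N : ℕ} {g : G → ℝ} (hg : Measurable g)
    (hdep : DependsOn g (Set.Iio N)) (u : G) :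
    ∫ x, g (x + u) ∂muG = ∫ x, g x ∂muG := by
  have hdep_add : DependsOn (fun x => g (x + u)) (Set.Iio N) := fun x y hxy =>
    hdep fun i hi => by rw [Pi.add_apply, Pi.add_apply, hxy i hi]
  rw [integral_eq_average_of_dependsOn (g := fun x => g (x + u))
    (hg.comp (measurable_add_const u)) hdep_add, integral_eq_average_of_dependsOn hg hdep]
  congr 1
  refine Fintype.sum_equiv (Equiv.addRight fun i : Fin N => u i) _ _ fun v => hdep fun i hi => ?_
  simp [extendZero, Set.mem_Iio.1 hi]

lemma DependsOn.abs_le_sum {N : ℕ} {g : G → ℝ} (hdep : DependsOn g (Set.Iio N)) (x : G) :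
    |g x| ≤ ∑ v : Fin N → ZMod 2, |g (extendZero N v)| := by
  have hx : g x = g (extendZero N fun i => x i) :=
    hdep fun i hi => by simp [extendZero, Set.mem_Iio.1 hi]
  rw [hx]
  exact single_le_sum (f := fun v => |g (extendZero N v)|) (fun _ _ => abs_nonneg _) (mem_univ _)

theorem integral_abs_convolution_le {N : ℕ} {Q : G → ℝ} (hQ : Measurable Q)
    (hdep : DependsOn Q (Set.Iio N)) {f : G → ℝ} (hf : Integrable f muG) :
    ∫ x, |∫ u, f u * Q (x + u) ∂muG| ∂muG ≤ (∫ y, |Q y| ∂muG) * ∫ u, |f u| ∂muG := by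
  set F : G × G → ℝ := fun z => |f z.2| * |Q (z.1 + z.2)|
  have hF : Integrable F (muG.prod muG) := by
    refine ((integrable_const (∑ v : Fin N → ZMod 2, |Q (extendZero N v)|)).mul_prod
      hf.abs).mono' ?_ (.of_forall fun z => ?_)
    · exact hf.abs.aestronglyMeasurable.comp_snd.mul
        (hQ.comp measurable_add).abs.aestronglyMeasurable
    · rw [Real.norm_eq_abs, abs_mul, abs_abs, abs_abs, mul_comm]
      exact mul_le_mul_of_nonneg_right (hdep.abs_le_sum _) (abs_nonneg _)
  have hshift (u : G) : ∫ x, |Q (x + u)| ∂muG = ∫ y, |Q y| ∂muG :=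
    integral_comp_add_right_of_dependsOn (g := fun y => |Q y|) hQ.abs
      (fun x y hxy => congrArg abs (hdep hxy)) u
  calc ∫ x, |∫ u, f u * Q (x + u) ∂muG| ∂muG ≤ ∫ x, ∫ u, F (x, u) ∂muG ∂muG :=
        integral_mono_of_nonneg (.of_forall fun _ => abs_nonneg _) hF.integral_prod_left
          (.of_forall fun x => (abs_integral_le_integral_abs).trans_eq (by simp [F, abs_mul]))
    _ = ∫ u, ∫ x, F (x, u) ∂muG ∂muG := integral_integral_swap hF
    _ = ∫ u, |f u| * ∫ y, |Q y| ∂muG ∂muG := by simp only [F, integral_const_mul, hshift]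
    _ = (∫ y, |Q y| ∂muG) * ∫ u, |f u| ∂muG := by rw [integral_mul_const, mul_comm]

lemma integrable_walsh (m : ℕ) : Integrable (walsh m) muG :=
  .of_bound (measurable_walsh m).aestronglyMeasurable 1 (.of_forall fun x => (abs_walsh m x).le)

theorem integral_walsh (m : ℕ) : ∫ x, walsh m x ∂muG = if m = 0 then 1 else 0 := by
  split_ifs with hm
  · simp [hm, walsh_zero]
  obtain ⟨i, hi, -⟩ := Nat.exists_most_significant_bit hm
  -- translating by the `i`-th unit vector flips the sign of `w_m`
  have h := integral_comp_add_right_of_dependsOn (measurable_walsh m) (dependsOn_walsh le_rfl)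
    (Pi.single i 1)
  simp only [walsh_add, walsh_single hi, integral_mul_const] at h
  linarith

lemma integrable_Dir (n : ℕ) : Integrable (Dir n) muG :=
  integrable_finsetSum _ fun k _ => integrable_walsh k

lemma integral_Dir (n : ℕ) : ∫ x, Dir n x ∂muG = if n = 0 then 0 else 1 := by
  simp only [Dir]
  rw [integral_finsetSum _ fun k _ => integrable_walsh k]
  simp only [integral_walsh, sum_ite_eq', mem_range]
  by_cases hn : n = 0 <;> simp [hn, Nat.pos_of_ne_zero]

lemma Dir_two_pow_add {m i : ℕ} (hi : i ≤ 2 ^ m) (x : G) :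
    Dir (2 ^ m + i) x = Dir (2 ^ m) x + walsh (2 ^ m) x * Dir i x := by
  rw [Dir, sum_range_add, Dir, Dir, mul_sum]
  congr 1
  exact sum_congr rfl fun k hk => walsh_two_pow_add ((mem_range.1 hk).trans_le hi) x

lemma Dir_two_pow_nonneg (m : ℕ) (x : G) : 0 ≤ Dir (2 ^ m) x := by
  induction m with
  | zero => simp [Dir, walsh_zero]
  | succ m ih =>
    rw [pow_succ, mul_two, Dir_two_pow_add le_rfl]
    have := abs_le.1 (abs_walsh (2 ^ m) x).le
    nlinarith

/-- `n` times the Walsh–Fejér kernel. -/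
def fejerSum (n : ℕ) (x : G) : ℝ := ∑ k ∈ range n, Dir k x

lemma integrable_fejerSum (n : ℕ) : Integrable (fejerSum n) muG :=
  integrable_finsetSum _ fun k _ => integrable_Dir k

lemma fejerSum_two_pow_add {m k : ℕ} (hk : k ≤ 2 ^ m) (x : G) :
    fejerSum (2 ^ m + k) x =
      fejerSum (2 ^ m) x + k * Dir (2 ^ m) x + walsh (2 ^ m) x * fejerSum k x := by
  rw [fejerSum, sum_range_add, sum_congr rfl fun i hi => Dir_two_pow_add
    ((mem_range.1 hi).le.trans hk) x, sum_add_distrib, sum_const, card_range, nsmul_eq_mul,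
    ← mul_sum, fejerSum, fejerSum, add_assoc]

lemma fejerSum_two_pow_nonneg (m : ℕ) (x : G) : 0 ≤ fejerSum (2 ^ m) x := by
  induction m with
  | zero => simp [fejerSum, Dir]
  | succ m ih =>
    rw [pow_succ, mul_two, fejerSum_two_pow_add le_rfl]
    have := abs_le.1 (abs_walsh (2 ^ m) x).le
    have := Dir_two_pow_nonneg m x
    have : (0 : ℝ) ≤ (2 ^ m : ℕ) := by positivity
    nlinarith

lemma integral_fejerSum_le (n : ℕ) : ∫ x, fejerSum n x ∂muG ≤ n := by
  simp only [fejerSum]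
  rw [integral_finsetSum _ fun k _ => integrable_Dir k]
  calc ∑ k ∈ range n, ∫ x, Dir k x ∂muG ≤ ∑ k ∈ range n, (1 : ℝ) :=
        sum_le_sum fun k _ => by rw [integral_Dir]; split_ifs <;> norm_num
    _ = n := by simp

theorem integral_abs_fejerSum_le (n : ℕ) : ∫ x, |fejerSum n x| ∂muG ≤ 4 * n := by
  induction n using Nat.strong_induction_on with
  | _ n ih =>
  rcases Nat.eq_zero_or_pos n with rfl | hn
  · simp [fejerSum]
  obtain ⟨m, k, hk, rfl⟩ : ∃ m k, k < 2 ^ m ∧ n = 2 ^ m + k := by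
    have hle := Nat.pow_log_le_self 2 hn.ne'
    have hlt := Nat.lt_pow_succ_log_self one_lt_two n
    rw [pow_succ] at hlt
    exact ⟨Nat.log 2 n, n - 2 ^ Nat.log 2 n, by omega, by omega⟩
  have hpt (x : G) : |fejerSum (2 ^ m + k) x| ≤
      fejerSum (2 ^ m) x + k * Dir (2 ^ m) x + |fejerSum k x| := by
    rw [fejerSum_two_pow_add hk.le]
    refine (abs_add_le _ _).trans ?_
    have := fejerSum_two_pow_nonneg m x
    have := Dir_two_pow_nonneg m x
    rw [abs_of_nonneg (by positivity), abs_mul, abs_walsh, one_mul]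
  have hint : Integrable (fun x => fejerSum (2 ^ m) x + k * Dir (2 ^ m) x + |fejerSum k x|) muG :=
    ((integrable_fejerSum _).add ((integrable_Dir _).const_mul _)).add (integrable_fejerSum k).abs
  calc ∫ x, |fejerSum (2 ^ m + k) x| ∂muG
      ≤ ∫ x, (fejerSum (2 ^ m) x + k * Dir (2 ^ m) x + |fejerSum k x|) ∂muG :=
        integral_mono (integrable_fejerSum _).abs hint hpt
    _ = ∫ x, fejerSum (2 ^ m) x ∂muG + k * ∫ x, Dir (2 ^ m) x ∂muG
          + ∫ x, |fejerSum k x| ∂muG := by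
        rw [integral_add (f := fun x => fejerSum (2 ^ m) x + k * Dir (2 ^ m) x)
          ((integrable_fejerSum _).add ((integrable_Dir _).const_mul _))
          (integrable_fejerSum k).abs, integral_add (integrable_fejerSum _)
          ((integrable_Dir _).const_mul _), integral_const_mul]
    _ ≤ (2 ^ m : ℕ) + k * 1 + 4 * k := by
        rw [integral_Dir, if_neg (by positivity)]
        gcongr
        · exact integral_fejerSum_le _
        · exact ih k (by omega)
    _ ≤ 4 * ((2 ^ m + k : ℕ) : ℝ) := by
        have : (k : ℝ) ≤ (2 ^ m : ℕ) := by exact_mod_cast hk.le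
        push_cast at this ⊢
        linarith

lemma tdig_eq_zero_of_le {p K j : ℕ} (hj : K ≤ j) : tdig ((p : ℝ) / 2 ^ K) j = 0 := by
  have heven : (p : ℝ) / 2 ^ K * 2 ^ (j + 1) = ((2 * (p * 2 ^ (j - K)) : ℕ) : ℝ) := by
    rw [show j + 1 = K + (j - K) + 1 by omega, pow_succ, pow_add]
    push_cast
    field_simp
  rw [tdig, heven, Int.floor_natCast]
  generalize p * 2 ^ (j - K) = q
  omega

lemma betaC_eq_one_of_le {p K j : ℕ} (hj : 2 ^ K ≤ j) : betaC ((p : ℝ) / 2 ^ K) j = 1 := by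
  have hK : K ≤ Nat.log 2 j := Nat.le_log_of_pow_le one_lt_two hj
  have hj0 : j ≠ 0 := by have := Nat.one_le_two_pow (n := K); omega
  rw [betaC, if_neg hj0, tdig_eq_zero_of_le (by omega), pow_zero]

lemma abs_betaC (t : ℝ) (j : ℕ) : |betaC t j| = 1 := by
  unfold betaC
  split_ifs <;> exact abs_neg_one_pow _

/-- `n` times the conjugate Walsh–Fejér kernel. -/
def conjFejerSum (t : ℝ) (n : ℕ) (y : G) : ℝ :=
  ∑ k ∈ range n, ∑ j ∈ range k, betaC t j * walsh j y

lemma measurable_conjFejerSum (t : ℝ) (n : ℕ) : Measurable (conjFejerSum t n) :=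
  Finset.measurable_sum _ fun _ _ =>
    Finset.measurable_sum _ fun j _ => (measurable_walsh j).const_mul _

lemma dependsOn_conjFejerSum (t : ℝ) (n : ℕ) : DependsOn (conjFejerSum t n) (Set.Iio n) :=
  fun x y hxy => sum_congr rfl fun k hk => sum_congr rfl fun j hj => by
    rw [dependsOn_walsh (((mem_range.1 hj).trans (mem_range.1 hk)).le) hxy]

lemma abs_conjFejerSum_sub_fejerSum_le {t : ℝ} {M : ℕ} (hβ : ∀ j, M ≤ j → betaC t j = 1)
    (n : ℕ) (y : G) : |conjFejerSum t n y - fejerSum n y| ≤ 2 * M * n := by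
  have hD (k : ℕ) : |∑ j ∈ range k, betaC t j * walsh j y - Dir k y| ≤ 2 * M := by
    have hsupp : ∑ j ∈ range k, (betaC t j - 1) * walsh j y
        = ∑ j ∈ range (min k M), (betaC t j - 1) * walsh j y := by
      refine (sum_subset (range_subset_range.2 (min_le_left k M)) fun j hjk hjM => ?_).symm
      rw [hβ j (by simp_all), sub_self, zero_mul]
    rw [Dir, ← sum_sub_distrib]
    simp_rw [← sub_one_mul]
    rw [hsupp]
    refine (abs_sum_le_sum_abs _ _).trans ((sum_le_card_nsmul _ _ 2 fun j _ => ?_).trans ?_)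
    · rw [abs_mul, abs_walsh, mul_one]
      exact (abs_sub _ _).trans_eq (by rw [abs_betaC, abs_one]; norm_num)
    · rw [card_range, nsmul_eq_mul, mul_comm]
      gcongr
      exact_mod_cast min_le_right k M
  rw [conjFejerSum, fejerSum, ← sum_sub_distrib]
  refine (abs_sum_le_sum_abs _ _).trans ((sum_le_card_nsmul _ _ _ fun k _ => hD k).trans ?_)
  rw [card_range, nsmul_eq_mul]
  linarith

theorem integral_abs_conjFejerSum_le {t : ℝ} {M : ℕ} (hβ : ∀ j, M ≤ j → betaC t j = 1)
    (n : ℕ) : ∫ y, |conjFejerSum t n y| ∂muG ≤ (4 + 2 * M) * n := by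
  have hint : Integrable (fun y => |fejerSum n y| + 2 * M * n) muG :=
    (integrable_fejerSum n).abs.add (integrable_const _)
  calc ∫ y, |conjFejerSum t n y| ∂muG ≤ ∫ y, (|fejerSum n y| + 2 * M * n) ∂muG :=
        integral_mono_of_nonneg (.of_forall fun _ => abs_nonneg _) hint (.of_forall fun y => by
          have := abs_conjFejerSum_sub_fejerSum_le hβ n y
          have := abs_sub_abs_le_abs_sub (conjFejerSum t n y) (fejerSum n y)
          linarith)
    _ = ∫ y, |fejerSum n y| ∂muG + 2 * M * n := by
        rw [integral_add (integrable_fejerSum n).abs (integrable_const _), integral_const,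
          probReal_univ, one_smul]
    _ ≤ (4 + 2 * M) * n := by
        have := integral_abs_fejerSum_le n
        linarith

theorem sigmaT_eq_integral (t : ℝ) {f : G → ℝ} (hf : Integrable f muG) (n : ℕ) (x : G) :
    sigmaT t f n x = 1 / n * ∫ u, f u * conjFejerSum t n (x + u) ∂muG := by
  have hfw (j : ℕ) : Integrable (fun u => f u * walsh j u) muG :=
    hf.mul_bdd (measurable_walsh j).aestronglyMeasurable (c := 1)
      (.of_forall fun u => (abs_walsh j u).le)
  have hexpand : (fun u => f u * conjFejerSum t n (x + u)) =
      fun u => ∑ k ∈ range n, ∑ j ∈ range k, betaC t j * walsh j x * (f u * walsh j u) := by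
    ext u
    simp only [conjFejerSum, walsh_add, mul_sum]
    exact sum_congr rfl fun k _ => sum_congr rfl fun j _ => by ring
  rw [hexpand,
    integral_finsetSum _ fun k _ => integrable_finsetSum _ fun j _ => (hfw j).const_mul _]
  simp only [sigmaT, Stilde, fcoef]
  congr 1
  refine sum_congr rfl fun k _ => ?_
  rw [integral_finsetSum _ fun j _ => (hfw j).const_mul _]
  exact sum_congr rfl fun j _ => by rw [integral_const_mul]; ring

theorem sigmaT_L1_bound_general (t : ℝ) (hd : IsDyadicRat t) :
    ∃ C : ℝ, ∀ f : G → ℝ, Integrable f muG → ∀ n : ℕ, 1 ≤ n →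
      ∫ x, |sigmaT t f n x| ∂muG ≤ C * ∫ x, |f x| ∂muG := by
  obtain ⟨p, K, rfl⟩ := hd
  set t : ℝ := (p : ℝ) / 2 ^ K
  refine ⟨4 + 2 * (2 ^ K : ℕ), fun f hf n hn => ?_⟩
  have hn' : (0 : ℝ) < n := by exact_mod_cast hn
  have hβ : ∀ j, 2 ^ K ≤ j → betaC t j = 1 := fun _ => betaC_eq_one_of_le
  calc ∫ x, |sigmaT t f n x| ∂muG
      = 1 / n * ∫ x, |∫ u, f u * conjFejerSum t n (x + u) ∂muG| ∂muG := by
        simp only [sigmaT_eq_integral t hf, abs_mul, integral_const_mul,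
          abs_of_pos (one_div_pos.2 hn')]
    _ ≤ 1 / n * ((∫ y, |conjFejerSum t n y| ∂muG) * ∫ u, |f u| ∂muG) := by
        gcongr
        exact integral_abs_convolution_le (measurable_conjFejerSum t n)
          (dependsOn_conjFejerSum t n) hf
    _ ≤ 1 / n * (((4 + 2 * (2 ^ K : ℕ)) * n) * ∫ u, |f u| ∂muG) := by
        gcongr
        exact integral_abs_conjFejerSum_le hβ n
    _ = (4 + 2 * (2 ^ K : ℕ)) * ∫ x, |f x| ∂muG := by field_simp

/-- For dyadic rational `t`, the conjugate Fejér means are uniformly `L¹`-bounded: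
`E|σ̃_n^{(t)} f| ≤ C E|f|`. -/
theorem sigmaT_L1_bound (t : ℝ) (ht : t ∈ Set.Ico (0:ℝ) 1) (hd : IsDyadicRat t) :
    ∃ C : ℝ, ∀ f : G → ℝ, Integrable f muG → ∀ n : ℕ, 1 ≤ n →
      ∫ x, |sigmaT t f n x| ∂muG ≤ C * ∫ x, |f x| ∂muG :=
  sigmaT_L1_bound_general t hd
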